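/- Euler's identity: ∑_{n≥0} q^{n(n+1)/2} z^n / (q)_n = ∏_{j≥1}(1 + z q^j) as formal power series in q and z. -/

import Mathlib

open Finset Filter Topology

/-!
With `a n = q ^ T_n / (q)_n`, the series `S w = ∑ a n w ^ n` converges for all `w` by the ratio
test, since `a (n + 1) / a n = q ^ (n + 1) / (1 - q ^ (n + 1)) → 0`. That same ratio gives the
functional equation `S w = (1 + q w) S (q w)`, whose iteration yields
`S z = ∏_{j < N} (1 + z q ^ (j + 1)) * S (q ^ N z)`. As `N → ∞` the argument `q ^ N z` tends to
`0`, where `S` is continuous with `S 0 = 1`, and the finite products tend to the infinite one.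
-/

section

variable {𝕜 : Type*} [NormedField 𝕜] {q : 𝕜}

def qPochhammer (q : 𝕜) (n : ℕ) : 𝕜 := ∏ j ∈ range n, (1 - q ^ (j + 1))

noncomputable def eulerCoeff (q : 𝕜) (n : ℕ) : 𝕜 := q ^ (n * (n + 1) / 2) / qPochhammer q n

noncomputable def eulerSeries (q w : 𝕜) : 𝕜 := ∑' n, eulerCoeff q n * w ^ n

theorem one_sub_pow_succ_ne_zero (hq : ‖q‖ < 1) (n : ℕ) : 1 - q ^ (n + 1) ≠ 0 := by
  intro h
  have hlt : ‖q ^ (n + 1)‖ < 1 := by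
    rw [norm_pow]; exact pow_lt_one₀ (norm_nonneg q) hq n.succ_ne_zero
  rw [← sub_eq_zero.mp h, norm_one] at hlt
  exact hlt.false

@[simp]
theorem eulerCoeff_zero (q : 𝕜) : eulerCoeff q 0 = 1 := by
  simp [eulerCoeff, qPochhammer]

theorem eulerCoeff_succ (q : 𝕜) (n : ℕ) :
    eulerCoeff q (n + 1) = eulerCoeff q n * (q ^ (n + 1) / (1 - q ^ (n + 1))) := by
  have htri : (n + 1) * (n + 1 + 1) / 2 = n * (n + 1) / 2 + (n + 1) := by
    have : (n + 1) * (n + 1 + 1) = n * (n + 1) + 2 * (n + 1) := by ring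
    omega
  rw [eulerCoeff, eulerCoeff, qPochhammer, htri, pow_add, prod_range_succ, mul_div_mul_comm,
    qPochhammer]

theorem summable_norm_eulerCoeff_mul_pow (hq : ‖q‖ < 1) (w : 𝕜) :
    Summable fun n ↦ ‖eulerCoeff q n * w ^ n‖ := by
  refine summable_of_ratio_norm_eventually_le (r := 1 / 2) (by norm_num) ?_
  have hratio : Tendsto (fun n : ℕ ↦ q ^ (n + 1) / (1 - q ^ (n + 1)) * w) atTop (𝓝 0) := by
    have hpow : Tendsto (fun n : ℕ ↦ q ^ (n + 1)) atTop (𝓝 0) :=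
      (tendsto_pow_atTop_nhds_zero_of_norm_lt_one hq).comp (tendsto_add_atTop_nat 1)
    have := (hpow.div (tendsto_const_nhds.sub hpow) (by simp : (1 : 𝕜) - 0 ≠ 0)).mul_const w
    rwa [zero_div, zero_mul] at this
  filter_upwards [hratio.norm.eventually_le_const (by norm_num : ‖(0 : 𝕜)‖ < 1 / 2)] with n hn
  rw [norm_norm, norm_norm]
  calc ‖eulerCoeff q (n + 1) * w ^ (n + 1)‖
      = ‖q ^ (n + 1) / (1 - q ^ (n + 1)) * w‖ * ‖eulerCoeff q n * w ^ n‖ := by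
        rw [eulerCoeff_succ, ← norm_mul]; congr 1; ring
    _ ≤ 1 / 2 * ‖eulerCoeff q n * w ^ n‖ := by gcongr

variable [CompleteSpace 𝕜]

theorem eulerSeries_eq_one_add (hq : ‖q‖ < 1) (w : 𝕜) :
    eulerSeries q w = 1 + ∑' n, eulerCoeff q (n + 1) * w ^ (n + 1) := by
  rw [eulerSeries, (summable_norm_eulerCoeff_mul_pow hq w).of_norm.tsum_eq_zero_add]
  simp

theorem eulerSeries_zero (hq : ‖q‖ < 1) : eulerSeries q 0 = 1 := by
  simp [eulerSeries_eq_one_add hq]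

theorem eulerSeries_eq_one_add_mul_mul (hq : ‖q‖ < 1) (w : 𝕜) :
    eulerSeries q w = (1 + q * w) * eulerSeries q (q * w) := by
  have hsum := (summable_norm_eulerCoeff_mul_pow hq (q * w)).of_norm
  have hterm (n : ℕ) : eulerCoeff q (n + 1) * w ^ (n + 1) =
      eulerCoeff q (n + 1) * (q * w) ^ (n + 1) + q * w * (eulerCoeff q n * (q * w) ^ n) := by
    rw [eulerCoeff_succ]
    field_simp [one_sub_pow_succ_ne_zero hq n]
    ring
  rw [eulerSeries_eq_one_add hq, tsum_congr hterm,
    ((summable_nat_add_iff 1).2 hsum).tsum_add (hsum.mul_left _), tsum_mul_left,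
    ← eulerSeries, eulerSeries_eq_one_add hq (q * w)]
  ring

theorem eulerSeries_eq_prod_mul (hq : ‖q‖ < 1) (z : 𝕜) (N : ℕ) :
    eulerSeries q z = (∏ j ∈ range N, (1 + z * q ^ (j + 1))) * eulerSeries q (q ^ N * z) := by
  induction N with
  | zero => simp
  | succ N ih =>
    rw [ih, eulerSeries_eq_one_add_mul_mul hq (q ^ N * z), prod_range_succ]
    ring_nf

theorem continuousOn_eulerSeries (hq : ‖q‖ < 1) :
    ContinuousOn (eulerSeries q) (Metric.closedBall 0 1) := by
  refine continuousOn_tsum (fun n ↦ by fun_prop)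
    (by simpa using summable_norm_eulerCoeff_mul_pow hq 1) fun n w hw ↦ ?_
  rw [norm_mul, norm_pow]
  exact mul_le_of_le_one_right (norm_nonneg _) (pow_le_one₀ (norm_nonneg w) (by simpa using hw))

theorem tendsto_eulerSeries_pow_mul (hq : ‖q‖ < 1) (z : 𝕜) :
    Tendsto (fun N ↦ eulerSeries q (q ^ N * z)) atTop (𝓝 1) := by
  have hlim : Tendsto (fun N ↦ q ^ N * z) atTop (𝓝 0) := by
    simpa using (tendsto_pow_atTop_nhds_zero_of_norm_lt_one hq).mul_const z
  have hcont : ContinuousAt (eulerSeries q) 0 :=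
    (continuousOn_eulerSeries hq).continuousAt (Metric.closedBall_mem_nhds 0 one_pos)
  rw [← eulerSeries_zero hq]
  exact hcont.tendsto.comp hlim

theorem multipliable_one_add_mul_pow (hq : ‖q‖ < 1) (z : 𝕜) :
    Multipliable fun j : ℕ ↦ 1 + z * q ^ (j + 1) := by
  refine multipliable_one_add_of_summable ?_
  simp_rw [norm_mul, norm_pow]
  exact ((summable_nat_add_iff 1).2 (summable_geometric_of_lt_one (norm_nonneg q) hq)).mul_left _

end

/-- Euler's identity: for `|q| < 1`,
`∑_{n ≥ 0} q^{n(n+1)/2} z^n / (q)_n = ∏_{j ≥ 1} (1 + z q^j)`,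
where `(q)_n = ∏_{j=1}^n (1 - q^j)`. -/
theorem euler_identity_tri (q z : ℂ) (hq : ‖q‖ < 1) :
    ∑' n : ℕ, q ^ (n * (n + 1) / 2) * z ^ n / ∏ j ∈ Finset.range n, (1 - q ^ (j + 1))
    = ∏' j : ℕ, (1 + z * q ^ (j + 1)) := by
  have hseries : ∑' n : ℕ, q ^ (n * (n + 1) / 2) * z ^ n / ∏ j ∈ Finset.range n, (1 - q ^ (j + 1))
      = eulerSeries q z :=
    tsum_congr fun n ↦ div_mul_eq_mul_div .. |>.symm
  have hlim : Tendsto (fun N ↦ (∏ j ∈ range N, (1 + z * q ^ (j + 1))) * eulerSeries q (q ^ N * z))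
      atTop (𝓝 ((∏' j : ℕ, (1 + z * q ^ (j + 1))) * 1)) :=
    (multipliable_one_add_mul_pow hq z).hasProd.tendsto_prod_nat.mul
      (tendsto_eulerSeries_pow_mul hq z)
  rw [hseries, ← mul_one (∏' j : ℕ, _)]
  exact tendsto_nhds_unique (tendsto_const_nhds.congr (eulerSeries_eq_prod_mul hq z)) hlim
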